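/- arXiv:1003.4467 — 3 statements merged into one kernel-verified Lean document; each statement's English description precedes it below -/
import Mathlib

section
/- Let A be a set, N ≥ 1 an integer, and w = i₀ i₁ … i_N a word over A whose letters are not all equal. Let C, Z ∈ A satisfy C ≠ i_{N−1}, Z ≠ i₀ and Z ≠ i_{N−1}, let k > 1 be an integer such that w contains no factor consisting of k consecutive occurrences of Z, and let τ be a word over A of length at most N whose last letter differs from i_{N−1}. Then the concatenated word τ′ = i₀ i₁ … i_N · C · Z^k · τ contains exactly one occurrence of the word i₀ i₁ … i_{N−1} as a factor, namely the occurrence starting at position 0. -/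
/-- Words over `A` are lists; `u` occurs as a factor of `v` at position `p` iff
`u` is a prefix of `v.drop p` (and `p + u.length ≤ v.length`). The word
`τ' = i₀ … i_N · C · Z^k · τ` contains exactly one occurrence of `i₀ … i_{N-1}`
as a factor, namely the one starting at position `0`. -/
theorem cubicWT_unique_occurrence {A : Type*} (N : ℕ) (hN : 1 ≤ N) (i : ℕ → A)
    (hne : ∃ j j', j ≤ N ∧ j' ≤ N ∧ i j ≠ i j')
    (C Z : A) (hC : C ≠ i (N - 1)) (hZ0 : Z ≠ i 0) (hZN : Z ≠ i (N - 1))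
    (k : ℕ) (hk : 1 < k)
    (hnoZ : ¬ ∃ p, p + k ≤ N + 1 ∧ ∀ t < k, i (p + t) = Z)
    (τ : List A) (hτlen : τ.length ≤ N)
    (hτlast : ∀ h : τ ≠ [], τ.getLast h ≠ i (N - 1)) :
    ∀ p, p + N ≤ (List.ofFn (fun j : Fin (N + 1) => i j) ++ [C] ++
                    List.replicate k Z ++ τ).length →
      ((List.ofFn (fun j : Fin N => i j) <+:
          (List.ofFn (fun j : Fin (N + 1) => i j) ++ [C] ++
            List.replicate k Z ++ τ).drop p) ↔ p = 0) := by
  intro p hp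
  set W : List A := List.ofFn (fun j : Fin (N + 1) => i j) with hW
  set u : List A := List.ofFn (fun j : Fin N => i j) with hu
  set T : List A := W ++ [C] ++ List.replicate k Z ++ τ with hT
  have hWlen : W.length = N + 1 := by simp [hW]
  have hTlen : T.length = N + 2 + k + τ.length := by
    simp [hT, hWlen]; ring
  have hulen : u.length = N := by simp [hu]
  -- getter lemmas
  have hg1 : ∀ j, j ≤ N → ∀ (h : j < T.length), T[j] = i j := by
    intro j hj h
    simp only [hT]
    rw [List.getElem_append_left (by simp [hWlen] <;> omega),
        List.getElem_append_left (by simp [hWlen] <;> omega),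
        List.getElem_append_left (by simp [hWlen] <;> omega)]
    simp only [hW]
    rw [List.getElem_ofFn]
  have hg2 : ∀ (h : N + 1 < T.length), T[N+1] = C := by
    intro h
    simp only [hT]
    rw [List.getElem_append_left (by simp [hWlen] <;> omega)]
    rw [List.getElem_append_left (by simp [hWlen] <;> omega)]
    rw [List.getElem_append_right (by simp [hWlen])]
    simp [hWlen]
  have hg3 : ∀ j, N + 2 ≤ j → j < N + 2 + k → ∀ (h : j < T.length), T[j] = Z := by
    intro j hj1 hj2 h
    simp only [hT]
    rw [List.getElem_append_left (by simp [hWlen] <;> omega)]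
    rw [List.getElem_append_right (by simp [hWlen] <;> omega)]
    simp
  have hg4 : ∀ t, (ht : t < τ.length) → ∀ (h : N + 2 + k + t < T.length),
      T[N+2+k+t] = τ[t] := by
    intro t ht h
    simp only [hT]
    rw [List.getElem_append_right (by simp [hWlen] <;> omega)]
    congr 1
    simp [hWlen]; omega
  constructor
  · intro hpre
    by_contra hp0
    have hp1 : 1 ≤ p := by omega
    -- occurrence characters
    have hc : ∀ t, t < N → ∀ (h : p + t < T.length), T[p+t] = i t := by
      intro t ht h
      have h2 := hpre.getElem (i := t) (by omega)
      rw [List.getElem_drop] at h2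
      rw [← h2]
      simp [hu, List.getElem_ofFn]
    rcases eq_or_lt_of_le hp1 with h1 | hp2
    · -- p = 1 : all letters equal
      have hstep : ∀ t, t < N → i (t + 1) = i t := by
        intro t ht
        have hb : p + t < T.length := by omega
        have := hc t ht hb
        rw [hg1 (p + t) (by omega) hb] at this
        rw [← h1] at this
        rw [Nat.add_comm t 1]; exact this
      have hall : ∀ j, j ≤ N → i j = i 0 := by
        intro j
        induction j with
        | zero => intro _; rfl
        | succ j ih => intro hj; rw [hstep j (by omega), ih (by omega)]
      obtain ⟨j, j', hj, hj', hne'⟩ := hne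
      exact hne' ((hall j hj).trans (hall j' hj').symm)
    · -- p ≥ 2
      by_cases hA : p + N ≤ N + 2 + k
      · -- last character is C or Z
        have hb : p + (N - 1) < T.length := by omega
        have hlast := hc (N - 1) (by omega) hb
        by_cases hq : p + (N - 1) = N + 1
        · simp only [hq] at hlast
          rw [hg2 (by omega)] at hlast
          exact hC hlast
        · rw [hg3 (p + (N-1)) (by omega) (by omega) hb] at hlast
          exact hZN hlast
      · by_cases hB1 : p ≤ N + 1
        · -- k consecutive Z's inside w
          apply hnoZ
          refine ⟨N + 2 - p, by omega, ?_⟩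
          intro t ht
          have hb : p + (N + 2 - p + t) < T.length := by omega
          have := hc (N + 2 - p + t) (by omega) hb
          rw [hg3 (p + (N + 2 - p + t)) (by omega) (by omega) hb] at this
          exact this.symm
        · by_cases hB2 : p ≤ N + 1 + k
          · -- first character is Z
            have hb : p + 0 < T.length := by omega
            have := hc 0 (by omega) hb
            rw [hg3 (p + 0) (by omega) (by omega) hb] at this
            exact hZ0 this
          · -- occurrence inside τ
            have hpeq : p = N + 2 + k := by omega
            have hτN : τ.length = N := by omega
            have hτne : τ ≠ [] := by
              intro h; rw [h] at hτN; simp at hτN; omega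
            have hb : p + (N - 1) < T.length := by omega
            have h1 := hc (N - 1) (by omega) hb
            have h2 := hg4 (N - 1) (by omega) (by omega)
            simp only [show N + 2 + k + (N - 1) = p + (N - 1) by omega] at h2
            apply hτlast hτne
            have h3 : τ.getLast hτne = τ[N-1]'(by omega) := by
              simp only [List.getLast_eq_getElem, hτN]
            rw [h3, ← h2]
            exact h1
  · rintro rfl
    rw [List.drop_zero, List.prefix_iff_eq_take]
    apply List.ext_getElem
    · simp [hulen, hTlen]; omega
    · intro j hj1 hj2
      rw [List.getElem_take]
      rw [hg1 j (by rw [hulen] at hj1; omega) (by omega)]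
      simp [hu, List.getElem_ofFn]
end

section
/- Let (𝓛, g) be a c-lamination with monotone itinerary i₀ … i_{N(𝓛)}, with m the distinguished g-preimage of c, ℓ = ℓ(𝓛) the distinguished g-preimage of d, and r > 0 the integer with g^r(m) = c′. Then: (a) the true 𝓛-itinerary of m does not have i₀ … i_{N(𝓛)} as an initial segment; and (b) no initial segment of the true 𝓛-itinerary of ℓ coincides with i_r … i_{N(𝓛)}. -/
open Set Relation

noncomputable section

instance : Fact ((0:ℝ) < 1) := ⟨one_pos⟩

/-- The circle `ℝ/ℤ`, parameterized with total arclength 1. -/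
abbrev S1 := AddCircle (1 : ℝ)

/-- The map `σ_d : t ↦ d·t (mod 1)`. -/
def sigd (d : ℕ) : S1 → S1 := fun t => d • t

/-- `σ₃`. -/
abbrev sig3 : S1 → S1 := sigd 3

/-- The identification of `S1` with the boundary of the closed unit disk in `ℂ`. -/
def toC (t : S1) : ℂ := (AddCircle.toCircle t : ℂ)

/-- Convex hull in the closed unit disk of a subset of the circle. -/
def chull (A : Set S1) : Set ℂ := convexHull ℝ (toC '' A)

/-- Two subsets of the circle are unlinked if their convex hulls are disjoint. -/
def SetUnlinked (A B : Set S1) : Prop := Disjoint (chull A) (chull B)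

/-- The length of the positively oriented arc from `s` to `t`, a number in `[0,1)`. -/
def posDist (s t : S1) : ℝ := ((AddCircle.equivIco 1 0 (t - s) : Set.Ico (0:ℝ) (0+1)) : ℝ)

/-- The positively oriented open arc `(s,t)`. -/
def posArc (s t : S1) : Set S1 := {x | 0 < posDist s x ∧ posDist s x < posDist s t}

/-- The positively oriented closed arc `[s,t]`. -/
def cArc (s t : S1) : Set S1 := {x | posDist s x ≤ posDist s t}

/-- The positively oriented half-open arc `[s,t)`. -/
def arcIco (s t : S1) : Set S1 := {x | posDist s x < posDist s t}

/-- The chord of the disk joining two points of the circle. -/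
def chordOf (x y : S1) : Set ℂ := segment ℝ (toC x) (toC y)

/-- `h` is injective and preserves circular order (with orientation) on `A`;
this is the notion of an order isomorphism onto the image (equivalently, of a
strictly monotonically increasing map on `A`). -/
def OrderIsoOn (h : S1 → S1) (A : Set S1) : Prop :=
  Set.InjOn h A ∧ ∀ x ∈ A, ∀ y ∈ A, ∀ z ∈ A,
    (posDist x y < posDist x z ↔ posDist (h x) (h y) < posDist (h x) (h z))

/-- The `∼`-class of a point for an equivalence relation on the circle. -/
def ClsOf (R : Setoid S1) (x : S1) : Set S1 := {y | R x y}

/-- `A` is a class of the equivalence relation `R`. -/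
def IsRClass (R : Setoid S1) (A : Set S1) : Prop := ∃ x, A = ClsOf R x

/-- `U` is a connected component of `A`. -/
def IsCC (A U : Set S1) : Prop := ∃ x ∈ A, U = connectedComponentIn A x

/-- A set with at least three points. -/
def AtLeast3 (A : Set S1) : Prop := ∃ a ∈ A, ∃ b ∈ A, ∃ c ∈ A, a ≠ b ∧ a ≠ c ∧ b ≠ c

/-- A set on which `σ_d` is not injective. -/
def CriticalSet (d : ℕ) (A : Set S1) : Prop := ¬ Set.InjOn (sigd d) A

/-- Some forward `σ_d`-image of `A` is critical. -/
def Precritical (d : ℕ) (A : Set S1) : Prop := ∃ n, CriticalSet d ((sigd d)^[n] '' A)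

/-- Two distinct forward `σ_d`-images of `A` coincide. -/
def Preperiodic (d : ℕ) (A : Set S1) : Prop :=
  ∃ i j, i < j ∧ (sigd d)^[i] '' A = (sigd d)^[j] '' A

/-- A wandering gap: at least three points, neither precritical nor preperiodic. -/
def WanderingGap (d : ℕ) (A : Set S1) : Prop :=
  AtLeast3 A ∧ ¬ Precritical d A ∧ ¬ Preperiodic d A

/-- A `σ_d`-invariant lamination (Thurston/Kiwi), as an equivalence relation on the circle. -/
structure IsInvLam (d : ℕ) (R : Setoid S1) : Prop where
  closed : IsClosed {p : S1 × S1 | R p.1 p.2}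
  unlinked : ∀ x y : S1, ¬ R x y → SetUnlinked (ClsOf R x) (ClsOf R y)
  totdisc : (∃ x y : S1, ¬ R x y) → ∀ x, IsTotallyDisconnected (ClsOf R x)
  forward : ∀ x, sigd d '' ClsOf R x = ClsOf R (sigd d x)
  backward : ∀ x z : S1, sigd d z ∈ ClsOf R x → ClsOf R z ⊆ sigd d ⁻¹' ClsOf R x
  gapinv : ∀ x, AtLeast3 (ClsOf R x) → ∀ s ∈ ClsOf R x, ∀ t ∈ ClsOf R x,
    IsCC (ClsOf R x)ᶜ (posArc s t) →
    IsCC (sigd d '' ClsOf R x)ᶜ (posArc (sigd d s) (sigd d t))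

/-- The union of the members of a finite collection of finite subsets of the circle. -/
def basisOf (L : Finset (Finset S1)) : Set S1 := ⋃ A ∈ L, (A : Set S1)

/-- A degree-`d` critical portrait. -/
def IsCritPortrait (d : ℕ) (Θ : Finset (Finset S1)) : Prop :=
  (∀ A ∈ Θ, A.Nonempty) ∧
  (∀ A ∈ Θ, ∀ a ∈ A, ∀ b ∈ A, a ≠ b → ((A : Set S1) ∩ posArc a b = ∅) →
    sigd d a = sigd d b) ∧
  ((Θ : Set (Finset S1)).Pairwise fun A B => SetUnlinked (A : Set S1) (B : Set S1)) ∧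
  (∑ A ∈ Θ, (A.card - 1)) = d - 1

/-- The space of degree-3 critical portraits. -/
def A3 : Type := {Θ : Finset (Finset S1) // IsCritPortrait 3 Θ}

/-- The compact-unlinked topology on the space of cubic critical portraits. -/
instance : TopologicalSpace A3 := TopologicalSpace.generateFrom
  {S | ∃ X : Set S1, IsCompact X ∧ S = {Θ : A3 | ∀ A ∈ Θ.1, SetUnlinked (A : Set S1) X}}

/-- `x` and `y` are unlinked with every member of the collection `L`. -/
def UnlRel (L : Finset (Finset S1)) (x y : S1) : Prop :=
  ∀ A ∈ L, Disjoint (chordOf x y) (chull (A : Set S1))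

/-- The `L`-unlinked class of a point. -/
def UnlClassOf (L : Finset (Finset S1)) (x : S1) : Set S1 :=
  {y | y ∉ basisOf L ∧ UnlRel L x y}

/-- `U` is an `L`-unlinked class. -/
def IsUnlClass (L : Finset (Finset S1)) (U : Set S1) : Prop :=
  ∃ x, x ∉ basisOf L ∧ U = UnlClassOf L x

open scoped Classical in
/-- The two-element collection `{c, d}`. -/
def pairCD (c d : Finset S1) : Finset (Finset S1) := {c, d}

/-- The entries at times `k` and `k+p` (intended: of the itineraries of points `u,v`)
given by small arcs on the right coincide. -/
def SameRR (L : Finset (Finset S1)) (u v : S1) : Prop :=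
  ∃ ε > (0:ℝ), ∀ δ : ℝ, 0 < δ → δ < ε →
    (u + (δ : S1)) ∉ basisOf L ∧ (v + (δ : S1)) ∉ basisOf L ∧
    UnlRel L (u + (δ : S1)) (v + (δ : S1))

/-- Similarly on the left. -/
def SameLL (L : Finset (Finset S1)) (u v : S1) : Prop :=
  ∃ ε > (0:ℝ), ∀ δ : ℝ, 0 < δ → δ < ε →
    (u - (δ : S1)) ∉ basisOf L ∧ (v - (δ : S1)) ∉ basisOf L ∧
    UnlRel L (u - (δ : S1)) (v - (δ : S1))

/-- The right class at `u` equals the left class at `v`. -/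
def SameRL (L : Finset (Finset S1)) (u v : S1) : Prop :=
  ∃ ε > (0:ℝ), ∀ δ : ℝ, 0 < δ → δ < ε →
    (u + (δ : S1)) ∉ basisOf L ∧ (v - (δ : S1)) ∉ basisOf L ∧
    UnlRel L (u + (δ : S1)) (v - (δ : S1))

/-- A critical portrait (given by a collection `L` of critical leaves) has aperiodic
kneading: for each endpoint `θ` of a leaf, neither the one-sided itinerary `Itin⁺(θ)`
nor `Itin⁻(θ)` is a periodic sequence of `L`-unlinked classes. -/
def AperiodicKneading (d : ℕ) (L : Finset (Finset S1)) : Prop :=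
  ∀ θ ∈ basisOf L,
    (¬ ∃ p, 0 < p ∧ ∀ k : ℕ, SameRR L ((sigd d)^[k] θ) ((sigd d)^[k + p] θ)) ∧
    (¬ ∃ p, 0 < p ∧ ∀ k : ℕ, SameLL L ((sigd d)^[k] θ) ((sigd d)^[k + p] θ))

/-- A lamination is `Θ`-compatible if each member of `Θ` is contained in a single class. -/
def Compatible (Θ : Finset (Finset S1)) (R : Setoid S1) : Prop :=
  ∀ A ∈ Θ, ∀ x ∈ A, ∀ y ∈ A, R x y

/-- `Itin⁺(x) = Itin⁻(y)`. -/
def ItinPMEq (d : ℕ) (L : Finset (Finset S1)) (x y : S1) : Prop :=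
  ∀ k : ℕ, SameRL L ((sigd d)^[k] x) ((sigd d)^[k] y)

/-- A condense (continuum-dense) subset: one meeting every non-degenerate subcontinuum. -/
def Condense {X : Type*} [TopologicalSpace X] (A : Set X) : Prop :=
  ∀ B : Set X, IsCompact B → IsConnected B → B.Nontrivial → (A ∩ B).Nonempty

/-- A branch point: the complement has at least three connected components. -/
def IsBranchPoint {X : Type*} [TopologicalSpace X] (z : X) : Prop :=
  ∃ a b c : X, a ∈ ({z}ᶜ : Set X) ∧ b ∈ ({z}ᶜ : Set X) ∧ c ∈ ({z}ᶜ : Set X) ∧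
    connectedComponentIn ({z}ᶜ) a ≠ connectedComponentIn ({z}ᶜ) b ∧
    connectedComponentIn ({z}ᶜ) a ≠ connectedComponentIn ({z}ᶜ) c ∧
    connectedComponentIn ({z}ᶜ) b ≠ connectedComponentIn ({z}ᶜ) c


/-- A degree-3 covering map of the circle. -/
def IsDeg3Cover (F : S1 → S1) : Prop :=
  IsCoveringMap F ∧ ∀ y : S1, (F ⁻¹' {y}).ncard = 3

/-- A finite dynamical lamination `(𝓛, g)`: a finite collection `cls` of finite
pairwise unlinked subsets of the circle (the classes), a sublamination `dcls`
on whose basis the map `g` is defined, such that `g` maps `dcls`-classes onto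
classes and extends to a degree-3 covering map of the circle. -/
structure DynLam where
  cls : Finset (Finset S1)
  dcls : Finset (Finset S1)
  g : S1 → S1
  nonempty : ∀ A ∈ cls, A.Nonempty
  unlinked : (cls : Set (Finset S1)).Pairwise fun A B => SetUnlinked (A : Set S1) (B : Set S1)
  sub : dcls ⊆ cls
  maps : ∀ A ∈ dcls, ∃ B ∈ cls, g '' (A : Set S1) = (B : Set S1)
  extend : ∃ F : S1 → S1, IsDeg3Cover F ∧ ∀ x ∈ basisOf dcls, F x = g x

/-- The domain of the map of a dynamical lamination. -/
def DynLam.dom (D : DynLam) : Set S1 := basisOf D.dcls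

/-- `B` is the `n`-th image of the class `A`, all intermediate images being classes. -/
def DynLam.IsIter (D : DynLam) (A : Finset S1) (n : ℕ) (B : Finset S1) : Prop :=
  ∃ f : ℕ → Finset S1, f 0 = A ∧ f n = B ∧
    ∀ k < n, f k ∈ D.dcls ∧ D.g '' ((f k : Set S1)) = ((f (k+1) : Set S1)) ∧ f (k+1) ∈ D.cls

/-- An admissible extension of the map of a dynamical lamination: a degree-3
covering map agreeing with `g` on its domain and strictly monotonically
increasing on every complementary interval of the domain. -/
def DynLam.Admissible (D : DynLam) (F : S1 → S1) : Prop :=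
  IsDeg3Cover F ∧ (∀ x ∈ D.dom, F x = D.g x) ∧
  ∀ x, x ∉ D.dom → OrderIsoOn F (connectedComponentIn (D.dom)ᶜ x)

/-- `D'` continues `D`. -/
def Continues (D' D : DynLam) : Prop :=
  D.cls ⊆ D'.cls ∧ D.dcls ⊆ D'.dcls ∧ ∀ x ∈ D.dom, D'.g x = D.g x

/-- A backward continuation: every new class eventually maps to an old class. -/
def BackwardCont (D' D : DynLam) : Prop :=
  Continues D' D ∧ ∀ A ∈ D'.cls, A ∉ D.cls → ∃ n B, D'.IsIter A n B ∧ B ∈ D.cls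

/-- Conjugacy of finite dynamical laminations by a circular order isomorphism of
their bases carrying classes to classes and conjugating the maps. -/
def DynConj (D D' : DynLam) : Prop :=
  ∃ h : S1 → S1, Set.BijOn h (basisOf D.cls) (basisOf D'.cls) ∧
    OrderIsoOn h (basisOf D.cls) ∧
    (∀ A ∈ D.cls, ∃ B ∈ D'.cls, h '' (A : Set S1) = (B : Set S1)) ∧
    h '' D.dom = D'.dom ∧ ∀ x ∈ D.dom, h (D.g x) = D'.g (h x)

/-- The closed unit disk in the plane. -/
def cdisk : Set ℂ := Metric.closedBall 0 1

/-- The part of the disk between two subsets of the circle: the union of the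
connected components of the disk minus the two convex hulls whose closures
meet both hulls. -/
def betweenRegion (A B : Set S1) : Set ℂ :=
  ⋃₀ {X | (∃ z ∈ cdisk \ (chull A ∪ chull B),
            X = connectedComponentIn (cdisk \ (chull A ∪ chull B)) z) ∧
          (closure X ∩ chull A).Nonempty ∧ (closure X ∩ chull B).Nonempty}

/-- Two subsets of the circle are adjacent relative to a finite lamination `L`
if the part of the disk between them is disjoint from `L`. -/
def AdjacentIn (L : Finset (Finset S1)) (A B : Set S1) : Prop :=
  Disjoint (betweenRegion A B) (toC '' basisOf L)

/-- `(a,b)` (in this circular order) is an edge of the class `T`: a boundary chord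
of its convex hull; the arc under this edge is `posArc a b`. -/
def IsEdge (T : Finset S1) (a b : S1) : Prop :=
  a ∈ T ∧ b ∈ T ∧ a ≠ b ∧ ((T : Set S1) ∩ posArc a b) = ∅

/-- A leaf-like triple: exactly one component of the complement of `T` in the circle
contains no point of the lamination `L`. -/
def LeafLike (L : Finset (Finset S1)) (T : Finset S1) : Prop :=
  ∃! p : S1 × S1, IsEdge T p.1 p.2 ∧ posArc p.1 p.2 ∩ basisOf L = ∅

/-- The (oriented) edge `(a,b)` of `T` is an empty edge: the arc under it contains
no point of `L`. -/
def IsEmptyEdge (L : Finset (Finset S1)) (T : Finset S1) (a b : S1) : Prop :=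
  IsEdge T a b ∧ posArc a b ∩ basisOf L = ∅

/-- The unordered pair `{a,b}` is an empty edge of `T`. -/
def IsEmptyEdgeU (L : Finset (Finset S1)) (T : Finset S1) (a b : S1) : Prop :=
  IsEmptyEdge L T a b ∨ IsEmptyEdge L T b a

/-- The long edge of a leaf-like triple `T` adjacent to a bud `x`: the edge
separating the rest of `T` (and `x`) from the rest of the lamination. -/
def IsLongEdge (L : Finset (Finset S1)) (T : Finset S1) (x : S1) (a b : S1) : Prop :=
  IsEdge T a b ∧ basisOf L \ ((T : Set S1) ∪ {x}) ⊆ posArc a b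

/-- A critical lamination: a dynamical lamination with two distinguished critical
leaves `c, d` mapped to points, the map preserving circular order on the
intersection of each `{c,d}`-unlinked class with the domain. -/
structure CritLam extends DynLam where
  c : Finset S1
  d : Finset S1
  hc : c ∈ cls
  hd : d ∈ cls
  hc2 : c.card = 2
  hd2 : d.card = 2
  hcdom : c ∈ dcls
  hddom : d ∈ dcls
  gc : (g '' (c : Set S1)).Subsingleton
  gd : (g '' (d : Set S1)).Subsingleton
  mono : ∀ U : Set S1, IsUnlClass (pairCD c d) U → OrderIsoOn g (U ∩ basisOf dcls)

/-- A finite cubic WT-lamination. -/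
structure WTLam extends CritLam where
  T1 : Finset S1
  hT1 : T1 ∈ cls
  hT13 : T1.card = 3
  cd_disj : Disjoint ((c : Set S1)) ((d : Set S1))
  classify : ∀ A ∈ cls,
    (A.card = 1 ∧ Xor' (∃ n, 0 < n ∧ toDynLam.IsIter c n A)
                       (∃ n, 0 < n ∧ toDynLam.IsIter d n A)) ∨
    (A.card = 2 ∧ ∃ i B, toDynLam.IsIter A i B ∧ (B = c ∨ B = d)) ∨
    (A.card = 3 ∧ ∃ n, toDynLam.IsIter T1 n A)

/-- The monotone sequence of intervals associated to the data of a c-lamination. -/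
def Kfun (g : S1 → S1) (r : ℕ) (a0 b0 xl yl : S1) : ℕ → Set S1 := fun k =>
  if k ≤ r then cArc (g^[k] a0) (g^[k] b0) else cArc (g^[k - r] xl) (g^[k - r] yl)

/-- The endpoints of the monotone sequence of intervals. -/
def KfunEnds (g : S1 → S1) (r : ℕ) (a0 b0 xl yl : S1) : ℕ → S1 × S1 := fun k =>
  if k ≤ r then (g^[k] a0, g^[k] b0) else (g^[k - r] xl, g^[k - r] yl)

/-- A c-lamination (Definition 2.8), together with its canonically associated data:
the triple `T^d`, the preimage `m` of `c`, the preimage `ℓ` of `d`, the last classes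
`c', d', T^l`, the number `r` with `g^r(m) = c'`, the endpoints of the short edge
of `T^d` facing `d'` and of `ℓ`, and the number `N(𝓛)`. -/
structure CLam extends WTLam where
  Td : Finset S1
  m : Finset S1
  ell : Finset S1
  cLast : Finset S1
  dLast : Finset S1
  Tl : Finset S1
  r : ℕ
  a0 : S1
  b0 : S1
  xl : S1
  yl : S1
  N : ℕ
  hTd : Td ∈ cls
  hm : m ∈ cls
  hell : ell ∈ cls
  hcLast : cLast ∈ cls
  hdLast : dLast ∈ cls
  hTl : Tl ∈ cls
  hcLast_not : cLast ∉ dcls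
  hdLast_not : dLast ∉ dcls
  hTl_not : Tl ∉ dcls
  hcLast_im : ∃ n, 0 < n ∧ toDynLam.IsIter c n cLast
  hdLast_im : ∃ n, 0 < n ∧ toDynLam.IsIter d n dLast
  hTd3 : Td.card = 3
  hTd_im : ∃ n, toDynLam.IsIter T1 n Td
  hm_pre : ∃ j, 0 < j ∧ toDynLam.IsIter m j c
  hell_pre : ∃ j, 0 < j ∧ toDynLam.IsIter ell j d
  hr : 0 < r
  hmr : toDynLam.IsIter m r cLast
  hTdTl : toDynLam.IsIter Td r Tl
  adjTd : AdjacentIn cls (Td : Set S1) (dLast : Set S1) ∧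
          AdjacentIn cls (Td : Set S1) (m : Set S1)
  adjIter : ∀ k ≤ r, ∀ B, toDynLam.IsIter Td k B →
    LeafLike cls B ∧ ∀ Cm, toDynLam.IsIter m k Cm →
      AdjacentIn cls (B : Set S1) (Cm : Set S1)
  hshort : IsEdge Td a0 b0 ∧ ∀ x ∈ dLast,
    AdjacentIn cls ({a0, b0} : Set S1) {x} ∧ x ∈ posArc a0 b0
  hshort_empty : ∀ k, 0 < k → k ≤ r → ∀ B, toDynLam.IsIter Td k B →
    IsEmptyEdgeU cls B (g^[k] a0) (g^[k] b0)
  hlong : ∃ u v : S1, IsEdge Tl u v ∧ (∀ x ∈ cLast, IsLongEdge cls Tl x u v) ∧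
    AdjacentIn cls ({u, v} : Set S1) (ell : Set S1)
  hellpts : (ell : Set S1) = {xl, yl}
  hKr : cArc (g^[r] a0) (g^[r] b0) ⊆ cArc xl yl
  hrN : r ≤ N
  hNcrit : ((c : Set S1) ⊆ Kfun g r a0 b0 xl yl N) ∨ ((d : Set S1) ⊆ Kfun g r a0 b0 xl yl N)
  hNmin : ∀ k < N, ¬ (((c : Set S1) ⊆ Kfun g r a0 b0 xl yl k) ∨
                      ((d : Set S1) ⊆ Kfun g r a0 b0 xl yl k))

/-- The underlying critical lamination of a c-lamination. -/
def CLam.crit (C : CLam) : CritLam := C.toWTLam.toCritLam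

/-- The underlying dynamical lamination of a c-lamination. -/
def CLam.dyn (C : CLam) : DynLam := C.toWTLam.toCritLam.toDynLam

/-- The monotone sequence of intervals of a c-lamination. -/
def CLam.K (C : CLam) : ℕ → Set S1 := Kfun C.g C.r C.a0 C.b0 C.xl C.yl

/-- The endpoints of the monotone sequence of intervals of a c-lamination. -/
def CLam.Kend (C : CLam) : ℕ → S1 × S1 := KfunEnds C.g C.r C.a0 C.b0 C.xl C.yl

/-- `I 0, …, I C.N` is a monotone itinerary of the c-lamination `C`. -/
def CLam.IsMonItin (C : CLam) (I : ℕ → Set S1) : Prop :=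
  (∀ j < C.N, IsUnlClass (pairCD C.c C.d) (I j) ∧
      posArc (C.Kend j).1 (C.Kend j).2 ⊆ I j) ∧
  IsUnlClass (pairCD C.c C.d) (I C.N) ∧ IsPreconnected (I C.N) ∧ I C.N ⊆ C.K C.N

/-- `E` is the entry (a `{c,d}`-unlinked class or a critical leaf) containing `A`. -/
def CritLam.EntryAt (C : CritLam) (A : Set S1) (E : Set S1) : Prop :=
  (E = (C.c : Set S1) ∧ A ⊆ (C.c : Set S1)) ∨
  (E = (C.d : Set S1) ∧ A ⊆ (C.d : Set S1)) ∨
  (IsUnlClass (pairCD C.c C.d) E ∧ A ⊆ E)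

/-- `I 0, …, I n` is the true itinerary of the class `A` (it ends exactly when the
orbit of `A` reaches a last class). -/
def CritLam.IsTrueItin (C : CritLam) (A : Finset S1) (n : ℕ) (I : ℕ → Set S1) : Prop :=
  ∃ f : ℕ → Finset S1, f 0 = A ∧
    (∀ k < n, f k ∈ C.dcls ∧ C.g '' ((f k : Set S1)) = ((f (k+1) : Set S1)) ∧ f (k+1) ∈ C.cls) ∧
    f n ∈ C.cls ∧ f n ∉ C.dcls ∧ ∀ k ≤ n, C.EntryAt ((f k : Set S1)) (I k)

/-- The maximal itinerary of the point `x` has length at least `L`. -/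
def CritLam.MaxItinAtLeast (C : CritLam) (x : S1) (L : ℕ) : Prop :=
  ∃ I : ℕ → Set S1, ∀ j < L,
    (I j = (C.c : Set S1) ∨ I j = (C.d : Set S1) ∨ IsUnlClass (pairCD C.c C.d) (I j)) ∧
    ∀ F : S1 → S1, C.toDynLam.Admissible F → F^[j] x ∈ I j

/-- A d-lamination: the definition of a c-lamination with the roles of `c` and `d`
interchanged (without the data of the monotone sequence of intervals). -/
structure DLam extends WTLam where
  Tc : Finset S1
  m : Finset S1
  ell : Finset S1
  cLast : Finset S1
  dLast : Finset S1
  Tl : Finset S1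
  r : ℕ
  hTc : Tc ∈ cls
  hm : m ∈ cls
  hell : ell ∈ cls
  hcLast : cLast ∈ cls
  hdLast : dLast ∈ cls
  hTl : Tl ∈ cls
  hcLast_not : cLast ∉ dcls
  hdLast_not : dLast ∉ dcls
  hTl_not : Tl ∉ dcls
  hcLast_im : ∃ n, 0 < n ∧ toDynLam.IsIter c n cLast
  hdLast_im : ∃ n, 0 < n ∧ toDynLam.IsIter d n dLast
  hTc3 : Tc.card = 3
  hTc_im : ∃ n, toDynLam.IsIter T1 n Tc
  hm_pre : ∃ j, 0 < j ∧ toDynLam.IsIter m j d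
  hell_pre : ∃ j, 0 < j ∧ toDynLam.IsIter ell j c
  hr : 0 < r
  hmr : toDynLam.IsIter m r dLast
  hTcTl : toDynLam.IsIter Tc r Tl
  adjTc : AdjacentIn cls (Tc : Set S1) (cLast : Set S1) ∧
          AdjacentIn cls (Tc : Set S1) (m : Set S1)
  adjIter : ∀ k ≤ r, ∀ B, toDynLam.IsIter Tc k B →
    LeafLike cls B ∧ ∀ Cm, toDynLam.IsIter m k Cm →
      AdjacentIn cls (B : Set S1) (Cm : Set S1)
  hshort : ∃ a b : S1, IsEdge Tc a b ∧
    (∀ x ∈ cLast, AdjacentIn cls ({a, b} : Set S1) {x} ∧ x ∈ posArc a b) ∧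
    ∀ k, 0 < k → k ≤ r → ∀ B, toDynLam.IsIter Tc k B →
      IsEmptyEdgeU cls B (g^[k] a) (g^[k] b)
  hlong : ∃ u v : S1, IsEdge Tl u v ∧ (∀ x ∈ dLast, IsLongEdge cls Tl x u v) ∧
    AdjacentIn cls ({u, v} : Set S1) (ell : Set S1)

/-- The underlying critical lamination of a d-lamination. -/
def DLam.crit (D : DLam) : CritLam := D.toWTLam.toCritLam

/-- The underlying dynamical lamination of a d-lamination. -/
def DLam.dyn (D : DLam) : DynLam := D.toWTLam.toCritLam.toDynLam

end

section Aux

open AddCircle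

/-! ### Basic facts about `posDist` -/

set_option linter.unnecessarySimpa false in
lemma posDist_mem_Ico (s t : S1) : posDist s t ∈ Set.Ico (0:ℝ) 1 := by
  have := (AddCircle.equivIco 1 0 (t - s)).2
  simpa [posDist] using this

lemma coe_posDist (s t : S1) : ((posDist s t : ℝ) : S1) = t - s := by
  exact (AddCircle.equivIco 1 0).symm_apply_apply (t - s)

lemma posDist_eq_fract {s t : S1} {x : ℝ} (h : t - s = (x : S1)) :
    posDist s t = Int.fract x := by
  unfold posDist
  rw [h]
  have := AddCircle.coe_equivIco_mk_apply (p := (1:ℝ)) (x := x)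
  simpa using this

lemma eq_of_posDist_eq {u w v : S1} (h : posDist u w = posDist u v) : w = v := by
  have h1 := coe_posDist u w
  have h2 := coe_posDist u v
  rw [h] at h1
  have : w - u = v - u := by rw [← h1, ← h2]
  exact sub_left_injective this

lemma posDist_pos {u w : S1} (h : w ≠ u) : 0 < posDist u w := by
  rcases lt_or_eq_of_le (posDist_mem_Ico u w).1 with h' | h'
  · exact h'
  · exfalso
    apply h
    have h2 := coe_posDist u w
    rw [← h'] at h2
    have h3 : w - u = 0 := by rw [← h2]; norm_cast
    exact sub_eq_zero.mp h3

lemma continuousOn_posDist (w : S1) :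
    ContinuousOn (fun x => posDist w x) {x : S1 | x ≠ w} := by
  intro x hx
  apply ContinuousAt.continuousWithinAt
  have h1 : ContinuousAt (fun y : S1 => y - w) x :=
    (continuous_id.sub continuous_const).continuousAt
  have h2 : ContinuousAt (AddCircle.equivIco 1 0) (x - w) :=
    AddCircle.continuousAt_equivIco 1 0 (sub_ne_zero.mpr hx)
  have h3 := ContinuousAt.comp (g := AddCircle.equivIco 1 0)
    (f := fun y : S1 => y - w) (x := x) h2 h1
  have h4 := ContinuousAt.comp (g := fun q : Set.Ico (0:ℝ) (0+1) => (q : ℝ))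
    (f := fun y : S1 => AddCircle.equivIco 1 0 (y - w)) (x := x)
    continuousAt_subtype_val h3
  exact h4

/-- Key geometric fact: a preconnected subset of the closed arc `[u,v]` containing
both `u` and `v` contains every point of the arc. -/
lemma arc_conn {A : Set S1} (hA : IsPreconnected A) {u v w : S1}
    (hu : u ∈ A) (hv : v ∈ A) (hsub : A ⊆ cArc u v) (hw : w ∈ cArc u v)
    (hwu : w ≠ u) (hwv : w ≠ v) (hwA : w ∉ A) : False := by
  set D := posDist u v with hD
  set t := posDist u w with ht
  have hD1 : D < 1 := (posDist_mem_Ico u v).2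
  have ht0 : 0 < t := posDist_pos hwu
  have htD : t ≤ D := hw
  have htD' : t < D := lt_of_le_of_ne htD (fun h => hwv (eq_of_posDist_eq h))
  have hcont : ContinuousOn (fun x => posDist w x) A :=
    (continuousOn_posDist w).mono (fun x hx h => hwA (h ▸ hx))
  have hfv : posDist w v = D - t := by
    rw [posDist_eq_fract (x := D - t) ?_, Int.fract_eq_self.mpr ⟨by linarith, by linarith⟩]
    rw [AddCircle.coe_sub, hD, ht, coe_posDist, coe_posDist]
    abel
  have hfu : posDist w u = 1 - t := by
    have ht1 : t < 1 := lt_of_le_of_lt htD hD1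
    rw [posDist_eq_fract (x := 1 - t) ?_, Int.fract_eq_self.mpr ⟨by linarith, by linarith⟩]
    rw [AddCircle.coe_sub, AddCircle.coe_period, ht, coe_posDist]
    abel
  set y := ((D - t) + (1 - t)) / 2 with hy
  have hy1 : D - t < y := by rw [hy]; linarith
  have hy2 : y < 1 - t := by rw [hy]; linarith
  have hIcc : y ∈ Set.Icc (posDist w v) (posDist w u) := by
    rw [hfv, hfu]; exact ⟨le_of_lt hy1, le_of_lt hy2⟩
  obtain ⟨x, hxA, hxy0⟩ := hA.intermediate_value hv hu hcont hIcc
  have hxy : posDist w x = y := hxy0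
  have hsx : posDist u x ≤ D := hsub hxA
  set s := posDist u x with hs
  have hs0 : 0 ≤ s := (posDist_mem_Ico u x).1
  have hxw : x - w = ((s - t : ℝ) : S1) := by
    rw [AddCircle.coe_sub, hs, ht, coe_posDist, coe_posDist]
    abel
  rcases le_or_gt t s with hcase | hcase
  · have : posDist w x = s - t := by
      rw [posDist_eq_fract hxw, Int.fract_eq_self.mpr ⟨by linarith, by linarith⟩]
    rw [this] at hxy
    linarith
  · have : posDist w x = s - t + 1 := by
      rw [posDist_eq_fract hxw]
      have h1 : Int.fract (s - t) = Int.fract (s - t + 1) := by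
        rw [show (s - t + 1 : ℝ) = s - t + ((1:ℤ) : ℝ) by push_cast; ring,
          Int.fract_add_intCast]
      rw [h1, Int.fract_eq_self.mpr ⟨by linarith, by linarith⟩]
    rw [this] at hxy
    linarith

/-! ### Unlinked classes contain no basis points -/

lemma unl_no_basis {L : Finset (Finset S1)} {E : Set S1} (hE : IsUnlClass L E)
    {y : S1} (hy : y ∈ basisOf L) (hyE : y ∈ E) : False := by
  obtain ⟨x, -, rfl⟩ := hE
  exact hyE.1 hy

lemma mem_basis_pairCD_left {c d : Finset S1} {y : S1} (hy : y ∈ c) :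
    y ∈ basisOf (pairCD c d) := by
  refine Set.mem_iUnion₂.mpr ⟨c, ?_, hy⟩
  exact Finset.mem_insert_self c {d}

lemma mem_basis_pairCD_right {c d : Finset S1} {y : S1} (hy : y ∈ d) :
    y ∈ basisOf (pairCD c d) := by
  refine Set.mem_iUnion₂.mpr ⟨d, ?_, hy⟩
  exact Finset.mem_insert_of_mem (Finset.mem_singleton_self d)

lemma entry_subset {C : CritLam} {A E : Set S1} (h : C.EntryAt A E) : A ⊆ E := by
  rcases h with ⟨he, h⟩ | ⟨he, h⟩ | ⟨-, h⟩
  · rw [he]; exact h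
  · rw [he]; exact h
  · exact h

/-! ### Uniqueness and image formula for orbit sequences -/

lemma seq_congr (g : S1 → S1) (f h : ℕ → Finset S1) (n1 n2 : ℕ)
    (h0 : f 0 = h 0)
    (hf : ∀ k < n1, g '' ((f k : Set S1)) = ((f (k+1) : Set S1)))
    (hh : ∀ k < n2, g '' ((h k : Set S1)) = ((h (k+1) : Set S1))) :
    ∀ k, k ≤ n1 → k ≤ n2 → f k = h k := by
  intro k
  induction k with
  | zero => intro _ _; exact h0
  | succ k ih =>
    intro h1 h2
    have hk1 : k < n1 := Nat.lt_of_succ_le h1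
    have hk2 : k < n2 := Nat.lt_of_succ_le h2
    apply Finset.coe_injective
    rw [← hf k hk1, ← hh k hk2, ih (le_of_lt hk1) (le_of_lt hk2)]

lemma seq_img (g : S1 → S1) (f : ℕ → Finset S1) (n : ℕ)
    (hf : ∀ k < n, g '' ((f k : Set S1)) = ((f (k+1) : Set S1))) :
    ∀ k ≤ n, (f k : Set S1) = g^[k] '' (f 0 : Set S1) := by
  intro k
  induction k with
  | zero => intro _; simp
  | succ k ih =>
    intro h1
    have hk : k < n := Nat.lt_of_succ_le h1
    rw [← hf k hk, ih (le_of_lt hk), Function.iterate_succ', Set.image_comp]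

end Aux

/-- Remark 2.10: (a) the true itinerary of `m` does not begin with the monotone
itinerary `i₀ … i_N`; (b) no initial segment of the true itinerary of `ℓ`
coincides with `i_r … i_N`. -/
theorem true_itineraries_avoid_monotone_itinerary (C : CLam) (I : ℕ → Set S1)
    (hI : C.IsMonItin I) :
    (¬ ∃ (n : ℕ) (J : ℕ → Set S1), C.crit.IsTrueItin C.m n J ∧ C.N ≤ n ∧
        ∀ k ≤ C.N, J k = I k) ∧
    (¬ ∃ (n : ℕ) (J : ℕ → Set S1), C.crit.IsTrueItin C.ell n J ∧ C.N - C.r ≤ n ∧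
        ∀ k ≤ C.N - C.r, J k = I (C.r + k)) := by
  obtain ⟨hIlt, hIN_unl, hIN_conn, hIN_sub⟩ := hI
  have hc_ne : C.c.Nonempty := Finset.card_pos.mp (by rw [C.hc2]; norm_num)
  have hd_ne : C.d.Nonempty := Finset.card_pos.mp (by rw [C.hd2]; norm_num)
  have hunl : ∀ j ≤ C.N, IsUnlClass (pairCD C.c C.d) (I j) := by
    intro j hj
    rcases lt_or_eq_of_le hj with hj' | hj'
    · exact (hIlt j hj').1
    · rw [hj']; exact hIN_unl
  constructor
  · -- part (a)
    rintro ⟨n, J, ⟨f, hf0, hfrec, hfncls, hfnnot, hent⟩, hNn, hJI⟩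
    obtain ⟨j, hj0, h, hh0, hhj, hhrec⟩ := C.hm_pre
    obtain ⟨h', hh'0, hh'r, hh'rec⟩ := C.hmr
    -- j ≤ r
    have hcong1 : ∀ k, k ≤ j → k ≤ C.r → h k = h' k :=
      seq_congr C.g h h' j C.r (hh0.trans hh'0.symm)
        (fun k hk => (hhrec k hk).2.1) (fun k hk => (hh'rec k hk).2.1)
    have hjr : j ≤ C.r := by
      by_contra hlt
      push_neg at hlt
      have h1 : h C.r = C.cLast := by rw [hcong1 C.r (le_of_lt hlt) le_rfl, hh'r]
      have h2 : h C.r ∈ C.dcls := (hhrec C.r hlt).1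
      rw [h1] at h2
      exact C.hcLast_not h2
    have hjN : j ≤ C.N := le_trans hjr C.hrN
    have hjn : j ≤ n := le_trans hjN hNn
    have hcong2 : ∀ k, k ≤ n → k ≤ j → f k = h k :=
      seq_congr C.g f h n j (hf0.trans hh0.symm)
        (fun k hk => (hfrec k hk).2.1) (fun k hk => (hhrec k hk).2.1)
    have hfj : f j = C.c := by rw [hcong2 j hjn le_rfl, hhj]
    have hsub : (C.c : Set S1) ⊆ I j := by
      have := entry_subset (hent j hjn)
      rw [hfj] at this
      rw [← hJI j hjN]
      exact this
    obtain ⟨y, hy⟩ := hc_ne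
    exact unl_no_basis (hunl j hjN) (mem_basis_pairCD_left hy) (hsub hy)
  · -- part (b)
    rintro ⟨n, J, ⟨f, hf0, hfrec, hfncls, hfnnot, hent⟩, hNrn, hJI⟩
    obtain ⟨j, hj0, h, hh0, hhj, hhrec⟩ := C.hell_pre
    have hjn : j ≤ n := by
      by_contra hlt
      push_neg at hlt
      have hcong : ∀ k, k ≤ n → k ≤ j → f k = h k :=
        seq_congr C.g f h n j (hf0.trans hh0.symm)
          (fun k hk => (hfrec k hk).2.1) (fun k hk => (hhrec k hk).2.1)
      have h1 : f n = h n := hcong n le_rfl (le_of_lt hlt)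
      have h2 : h n ∈ C.dcls := (hhrec n hlt).1
      rw [← h1] at h2
      exact hfnnot h2
    have hcong : ∀ k, k ≤ n → k ≤ j → f k = h k :=
      seq_congr C.g f h n j (hf0.trans hh0.symm)
        (fun k hk => (hfrec k hk).2.1) (fun k hk => (hhrec k hk).2.1)
    rcases le_or_gt j (C.N - C.r) with hcase | hcase
    · -- the orbit hits `d` within the available initial segment
      have hrjN : C.r + j ≤ C.N := by
        have := Nat.add_le_add_left hcase C.r
        rwa [Nat.add_sub_cancel' C.hrN] at this
      have hfj : f j = C.d := by rw [hcong j hjn le_rfl, hhj]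
      have hsub : (C.d : Set S1) ⊆ I (C.r + j) := by
        have := entry_subset (hent j hjn)
        rw [hfj] at this
        rw [← hJI j hcase]
        exact this
      obtain ⟨y, hy⟩ := hd_ne
      exact unl_no_basis (hunl (C.r + j) hrjN) (mem_basis_pairCD_right hy) (hsub hy)
    · -- the critical leaf inside `K N` obstructs connectivity of `I N`
      set k0 := C.N - C.r with hk0
      have hk0j : k0 ≤ j := le_of_lt hcase
      have hk0n : k0 ≤ n := le_trans hk0j hjn
      have hfk0 : f k0 = h k0 := hcong k0 hk0n hk0j
      have himg : (h k0 : Set S1) = C.g^[k0] '' (C.ell : Set S1) := by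
        rw [← hh0]
        exact seq_img C.g h j (fun k hk => (hhrec k hk).2.1) k0 hk0j
      set u := C.g^[k0] C.xl with hu
      set v := C.g^[k0] C.yl with hv
      have hpair : (f k0 : Set S1) = {u, v} := by
        rw [hfk0, himg, C.hellpts, Set.image_pair]
      have hrk0 : C.r + k0 = C.N := Nat.add_sub_cancel' C.hrN
      have hsubI : (f k0 : Set S1) ⊆ I C.N := by
        have := entry_subset (hent k0 hk0n)
        rw [← hrk0, ← hJI k0 le_rfl]
        exact this
      have huI : u ∈ I C.N := hsubI (by rw [hpair]; exact Set.mem_insert u {v})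
      have hvI : v ∈ I C.N := hsubI (by rw [hpair]; exact Set.mem_insert_of_mem u rfl)
      -- K N ⊆ cArc u v
      have hKsub : C.K C.N ⊆ cArc u v := by
        rcases le_or_gt C.N C.r with hNr | hNr
        · have hNr' : C.N = C.r := le_antisymm hNr C.hrN
          have hk00 : k0 = 0 := by rw [hk0, hNr']; exact Nat.sub_self C.r
          have hu0 : u = C.xl := by rw [hu, hk00]; rfl
          have hv0 : v = C.yl := by rw [hv, hk00]; rfl
          have : C.K C.N = cArc (C.g^[C.N] C.a0) (C.g^[C.N] C.b0) := by
            simp only [CLam.K, Kfun, if_pos hNr]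
          rw [this, hu0, hv0, hNr']
          exact C.hKr
        · have : C.K C.N = cArc u v := by
            simp only [CLam.K, Kfun, if_neg (not_le.mpr hNr), hu, hv, hk0]
          rw [this]
      -- a critical leaf point inside the arc
      obtain ⟨w, hwK, hwbasis⟩ :
          ∃ w, w ∈ C.K C.N ∧ w ∈ basisOf (pairCD C.c C.d) := by
        rcases C.hNcrit with hcc | hdd
        · obtain ⟨y, hy⟩ := hc_ne
          exact ⟨y, hcc hy, mem_basis_pairCD_left hy⟩
        · obtain ⟨y, hy⟩ := hd_ne
          exact ⟨y, hdd hy, mem_basis_pairCD_right hy⟩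
      have hwI : w ∉ I C.N := fun hC => unl_no_basis hIN_unl hwbasis hC
      have hwu : w ≠ u := fun e => hwI (e ▸ huI)
      have hwv : w ≠ v := fun e => hwI (e ▸ hvI)
      exact arc_conn hIN_conn huI hvI (hIN_sub.trans hKsub) (hKsub hwK) hwu hwv hwI
end

section
/- Let d ≥ 2 and let ∼ be an equivalence relation on S¹ such that the σ_d-image of every ∼-class is a ∼-class, and suppose S¹ is not a single ∼-class. Then every ∼-class is totally disconnected, and the σ_d-preimage of every ∼-class is a union of ∼-classes. -/
open Set Relation

/-- If the `σ_d`-image of every class of `∼` is a class and `S¹` is not a single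
class, then every class is totally disconnected and the `σ_d`-preimage of every
class is a union of classes. -/
theorem forward_invariance_implies (d : ℕ) (hd : 2 ≤ d) (R : Setoid S1)
    (hfwd : ∀ x : S1, ∃ y : S1, sigd d '' ClsOf R x = ClsOf R y)
    (hnontriv : ∃ x y : S1, ¬ R x y) :
    (∀ x : S1, IsTotallyDisconnected (ClsOf R x)) ∧
    (∀ x z : S1, sigd d z ∈ ClsOf R x → ClsOf R z ⊆ sigd d ⁻¹' ClsOf R x) := by
  obtain ⟨x0, y0, hxy⟩ := hnontriv
  have hd1 : (1:ℝ) < (d:ℝ) := by exact_mod_cast lt_of_lt_of_le one_lt_two hd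
  have hd0 : (0:ℝ) < (d:ℝ) := zero_lt_one.trans hd1
  -- iterated images of classes are classes
  have hcls : ∀ x : S1, ∀ n : ℕ, ∃ y, (sigd d)^[n] '' ClsOf R x = ClsOf R y := by
    intro x n
    induction n with
    | zero => exact ⟨x, by simp⟩
    | succ n ih =>
      obtain ⟨y, hy⟩ := ih
      obtain ⟨y', hy'⟩ := hfwd y
      exact ⟨y', by rw [Function.iterate_succ', Set.image_comp, hy, hy']⟩
  constructor
  · intro x t htsub htconn a ha b hb
    by_contra hab
    -- a point outside the class
    have hc : ∃ c : S1, c ∉ ClsOf R x := by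
      by_contra h
      push_neg at h
      exact hxy (R.trans (R.symm (h x0)) (h y0))
    obtain ⟨c, hc⟩ := hc
    set f : S1 → ℝ := fun z => (AddCircle.equivIco 1 0 (z - c) : ℝ) with hf
    have hcoe : ∀ z : S1, ((f z : ℝ) : S1) = z - c := fun z =>
      (AddCircle.equivIco 1 0).symm_apply_apply (z - c)
    have hinj : Function.Injective f := by
      intro z w hzw
      have : z - c = w - c := by rw [← hcoe z, ← hcoe w, hzw]
      exact sub_left_injective this
    have hcont : ContinuousOn f t := by
      intro z hz
      have hzc : z ≠ c := fun h => hc (htsub (h ▸ hz))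
      have : z - c ≠ ((0:ℝ) : S1) := by
        simpa using sub_ne_zero.mpr hzc
      have hsub : ContinuousAt (fun w : S1 => w - c) z :=
        (continuous_sub_right c).continuousAt
      have hg : ContinuousAt (fun u : S1 => (AddCircle.equivIco 1 0 u : ℝ)) (z - c) :=
        continuousAt_subtype_val.comp (AddCircle.continuousAt_equivIco 1 0 this)
      exact (ContinuousAt.comp (g := fun u : S1 => (AddCircle.equivIco 1 0 u : ℝ))
        (f := fun w : S1 => w - c) hg hsub).continuousWithinAt
    have himg : IsPreconnected (f '' t) := htconn.image f hcont
    have hord : Set.OrdConnected (f '' t) := himg.ordConnected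
    set α := min (f a) (f b) with hα
    set β := max (f a) (f b) with hβ
    have hαβ : α < β := min_lt_max.mpr (fun h => hab (hinj h))
    have hIcc : Set.Icc α β ⊆ f '' t := by
      rw [hα, hβ, ← Set.uIcc]
      exact hord.uIcc_subset ⟨a, ha, rfl⟩ ⟨b, hb, rfl⟩
    have hbase : ∀ r ∈ Set.Icc α β, c + (r : S1) ∈ ClsOf R x := by
      intro r hr
      obtain ⟨k, hk, hkr⟩ := hIcc hr
      have : ((r:ℝ) : S1) = k - c := by rw [← hkr]; exact hcoe k
      have : c + (r : S1) = k := by rw [this]; abel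
      rw [this]
      exact htsub hk
    -- expansion
    have key : ∀ n : ℕ, ∀ r : ℝ, r ∈ Set.Icc ((d:ℝ)^n * α) ((d:ℝ)^n * β) →
        ((d^n : ℕ) • c + (r : S1)) ∈ (sigd d)^[n] '' ClsOf R x := by
      intro n
      induction n with
      | zero => intro r hr; simpa using hbase r (by simpa using hr)
      | succ n ih =>
        intro r hr
        have hr' : r / d ∈ Set.Icc ((d:ℝ)^n * α) ((d:ℝ)^n * β) := by
          constructor
          · rw [le_div_iff₀ hd0]
            calc (d:ℝ)^n * α * d = (d:ℝ)^(n+1) * α := by ring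
              _ ≤ r := hr.1
          · rw [div_le_iff₀ hd0]
            calc r ≤ (d:ℝ)^(n+1) * β := hr.2
              _ = (d:ℝ)^n * β * d := by ring
        have hmem := ih (r / d) hr'
        rw [Function.iterate_succ', Set.image_comp]
        refine ⟨(d^n : ℕ) • c + ((r / d : ℝ) : S1), hmem, ?_⟩
        show d • ((d^n : ℕ) • c + ((r / d : ℝ) : S1)) = (d^(n+1) : ℕ) • c + (r : S1)
        have h1 : d • ((r / d : ℝ) : S1) = (r : S1) := by
          rw [← AddCircle.coe_nsmul]
          congr 1
          rw [nsmul_eq_mul]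
          field_simp
        rw [smul_add, smul_smul, h1, ← pow_succ']
    obtain ⟨n, hn⟩ := pow_unbounded_of_one_lt (1 / (β - α)) hd1
    have hβα : 0 < β - α := sub_pos.mpr hαβ
    have hn1 : 1 ≤ (d:ℝ)^n * (β - α) := by
      rw [div_lt_iff₀ hβα] at hn
      linarith
    obtain ⟨y, hy⟩ := hcls x n
    have huniv : ∀ w : S1, w ∈ ClsOf R y := by
      intro w
      rw [← hy]
      set s : ℝ := (AddCircle.equivIco 1 ((d:ℝ)^n * α) (w - (d^n : ℕ) • c) : ℝ) with hs
      have hs1 := (AddCircle.equivIco 1 ((d:ℝ)^n * α) (w - (d^n : ℕ) • c)).2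
      have hs2 : ((s:ℝ) : S1) = w - (d^n : ℕ) • c :=
        (AddCircle.equivIco 1 ((d:ℝ)^n * α)).symm_apply_apply _
      have hsmem : s ∈ Set.Icc ((d:ℝ)^n * α) ((d:ℝ)^n * β) := by
        constructor
        · exact hs1.1
        · have := hs1.2
          have h2 : (d:ℝ)^n * α + 1 ≤ (d:ℝ)^n * β := by nlinarith
          linarith
      have := key n s hsmem
      have heq : (d^n : ℕ) • c + ((s:ℝ) : S1) = w := by rw [hs2]; abel
      rwa [heq] at this
    exact hxy (R.trans (R.symm (huniv x0)) (huniv y0))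
  · intro x z hz w hw
    obtain ⟨y, hy⟩ := hfwd z
    have h1 : sigd d z ∈ ClsOf R y := hy ▸ ⟨z, R.refl z, rfl⟩
    have h2 : sigd d w ∈ ClsOf R y := hy ▸ ⟨w, hw, rfl⟩
    exact R.trans (R.trans hz (R.symm h1)) h2
end
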